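/- Fix ε₀ > 0 sufficiently small, set α := 1 + ε₀ and ε₁ := ε₀²/18, and define λ_q := ⌊λ₀^{α^q}⌋, δ_q := λ_q^{−2/5+2ε₀}, μ_q := δ_{q−1}^{1/4} δ_q^{1/4} λ_{q−1}^{1/2} λ_q^{1/2} for q ≥ 1, with λ₀ sufficiently large. Let d ∈ (0,1) satisfy d > (1+α)(4/5+ε₀) / ((1+α)(4/5+ε₀) + 2αε₁). Then the tail sums Σ_{q'=q}^{∞} λ_{q'}^{−d ε₁} μ_{q'}^{1−d} converge and tend to 0 as q → ∞. -/

import Mathlib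

/-! Up to a factor 2, `λ_q` is `λ₀^{α^q}`, and `μ_{q+1} = (λ_q λ_{q+1})^{2/5 + ε₀/2}`. Hence the
`(q+1)`-st term is at most `2 λ₀^{α^q c}` with `c = (1 + α)(2/5 + ε₀/2)(1 - d) - α d ε₁`, and the
hypothesis on `d` says exactly that `c < 0`. Bernoulli's inequality `α^q ≥ 1 + q ε₀` then dominates
the terms by a geometric series, whose tails tend to `0`. -/

open scoped BigOperators

noncomputable section

/-- `λ_q := ⌊λ₀^{(1+ε₀)^q}⌋`. -/
def lamP (l₀ ε₀ : ℝ) (q : ℕ) : ℝ := ((⌊l₀ ^ ((1 + ε₀) ^ q)⌋ : ℤ) : ℝ)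

/-- `δ_q := λ_q^{−2/5+2ε₀}`. -/
def delP (l₀ ε₀ : ℝ) (q : ℕ) : ℝ := lamP l₀ ε₀ q ^ (-(2 : ℝ)/5 + 2 * ε₀)

/-- `μ_q := δ_{q−1}^{1/4} δ_q^{1/4} λ_{q−1}^{1/2} λ_q^{1/2}` (for `q ≥ 1`). -/
def muP (l₀ ε₀ : ℝ) (q : ℕ) : ℝ :=
  delP l₀ ε₀ (q - 1) ^ ((1 : ℝ)/4) * delP l₀ ε₀ q ^ ((1 : ℝ)/4)
    * lamP l₀ ε₀ (q - 1) ^ ((1 : ℝ)/2) * lamP l₀ ε₀ q ^ ((1 : ℝ)/2)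

/-- The general term `λ_q^{−dε₁} μ_q^{1−d}` (with `ε₁ = ε₀²/18`) of the Hausdorff
covering estimate. -/
def covTerm (l₀ ε₀ d : ℝ) (q : ℕ) : ℝ :=
  lamP l₀ ε₀ q ^ (-(d * (ε₀ ^ 2 / 18))) * muP l₀ ε₀ q ^ (1 - d)

open Real

section Lambda

variable {l₀ ε₀ : ℝ}

lemma lamP_le_rpow (l₀ ε₀ : ℝ) (q : ℕ) : lamP l₀ ε₀ q ≤ l₀ ^ ((1 + ε₀) ^ q) :=
  Int.floor_le _

lemma one_le_rpow_pow (hl : 1 ≤ l₀) (hε : 0 ≤ ε₀) (q : ℕ) : 1 ≤ l₀ ^ ((1 + ε₀) ^ q) :=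
  one_le_rpow hl (by positivity)

lemma rpow_div_two_lt_lamP (hl : 1 ≤ l₀) (hε : 0 ≤ ε₀) (q : ℕ) :
    l₀ ^ ((1 + ε₀) ^ q) / 2 < lamP l₀ ε₀ q :=
  Int.div_two_lt_floor (one_le_rpow_pow hl hε q)

lemma lamP_pos (hl : 1 ≤ l₀) (hε : 0 ≤ ε₀) (q : ℕ) : 0 < lamP l₀ ε₀ q :=
  lt_trans (by linarith [one_le_rpow_pow hl hε q]) (rpow_div_two_lt_lamP hl hε q)

lemma muP_succ (hl : 1 ≤ l₀) (hε : 0 ≤ ε₀) (q : ℕ) :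
    muP l₀ ε₀ (q + 1) = lamP l₀ ε₀ q ^ (2/5 + ε₀/2) * lamP l₀ ε₀ (q + 1) ^ (2/5 + ε₀/2) := by
  have hfactor : ∀ A : ℝ, 0 < A →
      (A ^ (-(2:ℝ)/5 + 2 * ε₀)) ^ ((1:ℝ)/4) * A ^ ((1:ℝ)/2) = A ^ (2/5 + ε₀/2) := by
    intro A hA
    rw [← rpow_mul hA.le, ← rpow_add hA]
    ring_nf
  rw [← hfactor _ (lamP_pos hl hε q), ← hfactor _ (lamP_pos hl hε (q + 1))]
  simp only [muP, delP, Nat.add_sub_cancel]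
  ring

lemma covTerm_succ (hl : 1 ≤ l₀) (hε : 0 ≤ ε₀) (d : ℝ) (q : ℕ) :
    covTerm l₀ ε₀ d (q + 1) = lamP l₀ ε₀ q ^ ((2/5 + ε₀/2) * (1 - d))
      * lamP l₀ ε₀ (q + 1) ^ ((2/5 + ε₀/2) * (1 - d) - d * (ε₀ ^ 2 / 18)) := by
  have hlam := lamP_pos hl hε q
  have hlam' := lamP_pos hl hε (q + 1)
  rw [covTerm, muP_succ hl hε, mul_rpow (rpow_nonneg hlam.le _) (rpow_nonneg hlam'.le _),
    ← rpow_mul hlam.le, ← rpow_mul hlam'.le, sub_eq_add_neg _ (d * _), rpow_add hlam']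
  ring

lemma covTerm_succ_nonneg (hl : 1 ≤ l₀) (hε : 0 ≤ ε₀) (d : ℝ) (q : ℕ) :
    0 ≤ covTerm l₀ ε₀ d (q + 1) := by
  have := lamP_pos hl hε q
  have := lamP_pos hl hε (q + 1)
  rw [covTerm_succ hl hε]
  positivity

end Lambda

lemma rpow_le_two_mul_rpow {x L e : ℝ} (hL : 0 < L) (hx : L / 2 ≤ x) (hxL : x ≤ L)
    (he : -1 ≤ e) : x ^ e ≤ 2 * L ^ e := by
  have hx0 : 0 < x := by linarith
  rcases le_or_gt 0 e with he0 | he0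
  · linarith [rpow_le_rpow hx0.le hxL he0, rpow_nonneg hL.le e]
  · calc x ^ e ≤ (L / 2) ^ e := rpow_le_rpow_of_nonpos (by positivity) hx he0.le
      _ = 2 ^ (-e) * L ^ e := by
        rw [div_rpow hL.le zero_le_two, rpow_neg zero_le_two]; ring
      _ ≤ 2 * L ^ e := by
        gcongr
        calc (2:ℝ) ^ (-e) ≤ 2 ^ (1:ℝ) := rpow_le_rpow_of_exponent_le one_le_two (by linarith)
          _ = 2 := rpow_one 2

def covExponent (ε₀ d : ℝ) : ℝ :=
  (2 + ε₀) * ((2/5 + ε₀/2) * (1 - d)) - (1 + ε₀) * d * (ε₀ ^ 2 / 18)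

lemma covExponent_neg {ε₀ d : ℝ} (hε : 0 ≤ ε₀)
    (hd : ((1 + (1 + ε₀)) * (4/5 + ε₀))
      / ((1 + (1 + ε₀)) * (4/5 + ε₀) + 2 * (1 + ε₀) * (ε₀ ^ 2 / 18)) < d) :
    covExponent ε₀ d < 0 := by
  rw [div_lt_iff₀ (by positivity)] at hd
  have h2c : 2 * covExponent ε₀ d = (1 + (1 + ε₀)) * (4/5 + ε₀)
      - d * ((1 + (1 + ε₀)) * (4/5 + ε₀) + 2 * (1 + ε₀) * (ε₀ ^ 2 / 18)) := by
    rw [covExponent]; ring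
  linarith

lemma covTerm_succ_le {l₀ ε₀ d : ℝ} (hl : 1 ≤ l₀) (hε : 0 ≤ ε₀) (hε1 : ε₀ ≤ 1) (hd1 : d ≤ 1)
    (q : ℕ) :
    covTerm l₀ ε₀ d (q + 1) ≤ 2 * l₀ ^ ((1 + ε₀) ^ q * covExponent ε₀ d) := by
  set b := (2/5 + ε₀/2) * (1 - d)
  set e := b - d * (ε₀ ^ 2 / 18)
  have hl0 : 0 < l₀ := by linarith
  have hb : 0 ≤ b := mul_nonneg (by positivity) (by linarith)
  have he : -1 ≤ e := by
    have : d * (ε₀ ^ 2 / 18) ≤ 1 := mul_le_one₀ hd1 (by positivity) (by nlinarith)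
    simp only [e]
    linarith
  have hfirst : lamP l₀ ε₀ q ^ b ≤ (l₀ ^ ((1 + ε₀) ^ q)) ^ b :=
    rpow_le_rpow (lamP_pos hl hε q).le (lamP_le_rpow l₀ ε₀ q) hb
  have hsecond : lamP l₀ ε₀ (q + 1) ^ e ≤ 2 * (l₀ ^ ((1 + ε₀) ^ (q + 1))) ^ e :=
    rpow_le_two_mul_rpow (rpow_pos_of_pos hl0 _) (rpow_div_two_lt_lamP hl hε _).le
      (lamP_le_rpow l₀ ε₀ _) he
  calc covTerm l₀ ε₀ d (q + 1) = lamP l₀ ε₀ q ^ b * lamP l₀ ε₀ (q + 1) ^ e :=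
        covTerm_succ hl hε d q
    _ ≤ (l₀ ^ ((1 + ε₀) ^ q)) ^ b * (2 * (l₀ ^ ((1 + ε₀) ^ (q + 1))) ^ e) :=
        mul_le_mul hfirst hsecond (rpow_nonneg (lamP_pos hl hε _).le _) (by positivity)
    _ = 2 * l₀ ^ ((1 + ε₀) ^ q * covExponent ε₀ d) := by
        rw [← rpow_mul hl0.le, ← rpow_mul hl0.le, mul_left_comm, ← rpow_add hl0]
        simp only [covExponent, e, b]
        ring_nf

lemma rpow_pow_mul_le_mul_geometric {L ε c : ℝ} (hL : 1 ≤ L) (hε : 0 ≤ ε) (hc : c ≤ 0)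
    (q : ℕ) : L ^ ((1 + ε) ^ q * c) ≤ L ^ c * (L ^ (ε * c)) ^ q := by
  have hL0 : 0 < L := by linarith
  calc L ^ ((1 + ε) ^ q * c) ≤ L ^ ((1 + q * ε) * c) :=
        rpow_le_rpow_of_exponent_le hL
          (mul_le_mul_of_nonpos_right (one_add_mul_le_pow (by linarith) q) hc)
    _ = L ^ c * (L ^ (ε * c)) ^ q := by
        rw [← rpow_natCast, ← rpow_mul hL0.le, ← rpow_add hL0]
        ring_nf

lemma summable_of_le_rpow_pow_mul {f : ℕ → ℝ} {C L ε c : ℝ} (hC : 0 ≤ C) (hL : 1 < L)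
    (hε : 0 < ε) (hc : c < 0) (hf0 : ∀ q, 0 ≤ f q)
    (hf : ∀ q, f q ≤ C * L ^ ((1 + ε) ^ q * c)) : Summable f := by
  have hr : L ^ (ε * c) < 1 := rpow_lt_one_of_one_lt_of_neg hL (mul_neg_of_pos_of_neg hε hc)
  refine Summable.of_nonneg_of_le hf0 (fun q => (hf q).trans ?_)
    ((summable_geometric_of_lt_one (by positivity) hr).mul_left (C * L ^ c))
  rw [mul_assoc]
  exact mul_le_mul_of_nonneg_left (rpow_pow_mul_le_mul_geometric hL.le hε.le hc.le q) hC

/-- **Convergence of the covering sums** (Section 7 of the paper): for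
`d > (1+α)(4/5+ε₀)/((1+α)(4/5+ε₀)+2αε₁)` the tail sums
`Σ_{q'≥q} λ_{q'}^{−dε₁} μ_{q'}^{1−d}` converge and tend to `0` as `q → ∞`. -/
theorem covering_sums_tendto_zero :
    ∃ ε' : ℝ, 0 < ε' ∧ ∀ ε₀ : ℝ, 0 < ε₀ → ε₀ < ε' →
    ∃ Λ₀ : ℝ, ∀ l₀ : ℝ, Λ₀ ≤ l₀ →
    ∀ d : ℝ, 0 < d → d < 1 →
      ((1 + (1 + ε₀)) * (4/5 + ε₀))
          / ((1 + (1 + ε₀)) * (4/5 + ε₀) + 2 * (1 + ε₀) * (ε₀ ^ 2 / 18)) < d →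
      Summable (fun q' : ℕ => covTerm l₀ ε₀ d (q' + 1)) ∧
      Filter.Tendsto (fun q : ℕ => ∑' i : ℕ, covTerm l₀ ε₀ d (q + 1 + i))
        Filter.atTop (nhds 0) := by
  refine ⟨1, one_pos, fun ε₀ hε hε1 => ⟨2, fun l₀ hl d hd0 hd1 hd => ?_⟩⟩
  have hl1 : 1 < l₀ := by linarith
  have hsum : Summable (fun q : ℕ => covTerm l₀ ε₀ d (q + 1)) :=
    summable_of_le_rpow_pow_mul zero_le_two hl1 hε (covExponent_neg hε.le hd)
      (covTerm_succ_nonneg hl1.le hε.le d)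
      (covTerm_succ_le hl1.le hε.le hε1.le hd1.le)
  refine ⟨hsum, (tendsto_sum_nat_add fun i => covTerm l₀ ε₀ d (i + 1)).congr fun q =>
    tsum_congr fun i => ?_⟩
  rw [add_comm i, add_right_comm]
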